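/- Let γ ≥ 1 and h ∈ (0,1], let 𝒫 be the projection operator, and let f : ℝ^d → ℝ^d satisfy ‖f(x) − f(y)‖ ≤ C₁(1 + ‖x‖ + ‖y‖)^{γ−1}‖x − y‖ for all x, y ∈ ℝ^d and some constant C₁ ≥ 0. Then for all x, y ∈ ℝ^d: ‖f(𝒫(x)) − f(𝒫(y))‖ ≤ 3^{γ−1} C₁ h^{−(γ−1)/(2γ)}‖x − y‖. -/

import Mathlib

/-!
`𝒫` is the radial retraction onto the closed ball of radius `R = h^{-1/(2γ)} ≥ 1`. This
retraction is `1`-Lipschitz and takes values in the ball, so on its image the growth factor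
`(1 + ‖x‖ + ‖y‖)^{γ-1}` is at most `(1 + 2R)^{γ-1} ≤ (3R)^{γ-1} = 3^{γ-1} h^{-(γ-1)/(2γ)}`.
-/

open RealInnerProductSpace

/-- The projection operator `𝒫(x) = min {1, h^{-1/(2γ)} ‖x‖⁻¹} • x`
(with `𝒫(0) = 0`, since in `ℝ` we have `0⁻¹ = 0`). -/
noncomputable def proj {d : ℕ} (γ h : ℝ) (x : EuclideanSpace ℝ (Fin d)) :
    EuclideanSpace ℝ (Fin d) :=
  min 1 (h ^ (-(1 : ℝ) / (2 * γ)) * ‖x‖⁻¹) • x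

lemma min_one_mul_inv_mul {R X : ℝ} (hR : 0 ≤ R) (hX : 0 ≤ X) :
    min 1 (R * X⁻¹) * X = min X R := by
  rcases hX.eq_or_lt with rfl | hX
  · simp [hR]
  · rw [min_mul_of_nonneg _ _ hX.le, one_mul, inv_mul_cancel_right₀ hX.ne']

lemma min_one_mul_inv_nonneg {R X : ℝ} (hR : 0 ≤ R) (hX : 0 ≤ X) : 0 ≤ min 1 (R * X⁻¹) :=
  le_min zero_le_one (by positivity)

section RadialRetraction

variable {E : Type*} [NormedAddCommGroup E] [InnerProductSpace ℝ E]

lemma norm_smul_sub_smul_le {a b : ℝ} (ha : 0 ≤ a) (hb : 0 ≤ b) (hab : a * b ≤ 1) {x y : E}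
    (hgap : |a * ‖x‖ - b * ‖y‖| ≤ |‖x‖ - ‖y‖|) : ‖a • x - b • y‖ ≤ ‖x - y‖ := by
  have hgap_sq : (a * ‖x‖ - b * ‖y‖) ^ 2 ≤ (‖x‖ - ‖y‖) ^ 2 := sq_le_sq.mpr hgap
  have hinner : ⟪x, y⟫ ≤ ‖x‖ * ‖y‖ := real_inner_le_norm x y
  refine (pow_le_pow_iff_left₀ (norm_nonneg _) (norm_nonneg _) two_ne_zero).mp ?_
  rw [norm_sub_sq_real, norm_sub_sq_real, real_inner_smul_left, real_inner_smul_right,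
    norm_smul, norm_smul, Real.norm_of_nonneg ha, Real.norm_of_nonneg hb]
  -- the difference of the two sides is `2 (1 - ab) (‖x‖‖y‖ - ⟪x, y⟫)` plus the gap difference
  nlinarith [mul_nonneg (sub_nonneg.2 hab) (sub_nonneg.2 hinner)]

noncomputable def radialRetraction (R : ℝ) (x : E) : E :=
  min 1 (R * ‖x‖⁻¹) • x

variable {R : ℝ}

lemma norm_radialRetraction (hR : 0 ≤ R) (x : E) : ‖radialRetraction R x‖ = min ‖x‖ R := by
  rw [radialRetraction, norm_smul,
    Real.norm_of_nonneg (min_one_mul_inv_nonneg hR (norm_nonneg x)),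
    min_one_mul_inv_mul hR (norm_nonneg x)]

lemma norm_radialRetraction_le (hR : 0 ≤ R) (x : E) : ‖radialRetraction R x‖ ≤ R :=
  (norm_radialRetraction hR x).trans_le (min_le_right _ _)

lemma norm_radialRetraction_sub_le (hR : 0 ≤ R) (x y : E) :
    ‖radialRetraction R x - radialRetraction R y‖ ≤ ‖x - y‖ := by
  have hgap : |min ‖x‖ R - min ‖y‖ R| ≤ |‖x‖ - ‖y‖| := by
    simpa using abs_min_sub_min_le_max ‖x‖ R ‖y‖ R
  have hy := min_one_mul_inv_nonneg hR (norm_nonneg y)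
  refine norm_smul_sub_smul_le (min_one_mul_inv_nonneg hR (norm_nonneg x)) hy
    (mul_le_one₀ (min_le_left _ _) hy (min_le_left _ _)) ?_
  rwa [min_one_mul_inv_mul hR (norm_nonneg x), min_one_mul_inv_mul hR (norm_nonneg y)]

end RadialRetraction

lemma proj_eq_radialRetraction {d : ℕ} (γ h : ℝ) :
    proj (d := d) γ h = radialRetraction (h ^ (-(1 : ℝ) / (2 * γ))) :=
  rfl

/-- If `f` satisfies the polynomial Lipschitz condition with constant `C₁`
and exponent `γ - 1`, then `f ∘ 𝒫` is globally Lipschitz with constant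
`3^{γ-1} C₁ h^{-(γ-1)/(2γ)}`. -/
theorem stmt_10 {d : ℕ} (γ h : ℝ) (hγ : 1 ≤ γ) (hh0 : 0 < h) (hh1 : h ≤ 1)
    (C₁ : ℝ) (hC₁ : 0 ≤ C₁)
    (f : EuclideanSpace ℝ (Fin d) → EuclideanSpace ℝ (Fin d))
    (hf : ∀ x y : EuclideanSpace ℝ (Fin d),
      ‖f x - f y‖ ≤ C₁ * (1 + ‖x‖ + ‖y‖) ^ (γ - 1) * ‖x - y‖) :
    ∀ x y : EuclideanSpace ℝ (Fin d),
      ‖f (proj γ h x) - f (proj γ h y)‖ ≤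
        (3 : ℝ) ^ (γ - 1) * C₁ * h ^ (-(γ - 1) / (2 * γ)) * ‖x - y‖ := by
  intro x y
  set R := h ^ (-(1 : ℝ) / (2 * γ)) with hR_def
  have hR : 1 ≤ R := Real.one_le_rpow_of_pos_of_le_one_of_nonpos hh0 hh1
    (div_nonpos_of_nonpos_of_nonneg (by norm_num) (by linarith))
  have hbase : 1 + ‖proj γ h x‖ + ‖proj γ h y‖ ≤ 3 * R := by
    rw [proj_eq_radialRetraction]
    linarith [norm_radialRetraction_le (zero_le_one.trans hR) x,
      norm_radialRetraction_le (zero_le_one.trans hR) y]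
  have h3R : (3 * R) ^ (γ - 1) = 3 ^ (γ - 1) * h ^ (-(γ - 1) / (2 * γ)) := by
    rw [Real.mul_rpow (by norm_num) (by positivity), hR_def, ← Real.rpow_mul hh0.le]
    ring_nf
  calc ‖f (proj γ h x) - f (proj γ h y)‖
      ≤ C₁ * (1 + ‖proj γ h x‖ + ‖proj γ h y‖) ^ (γ - 1) * ‖proj γ h x - proj γ h y‖ := hf _ _
    _ ≤ C₁ * (3 * R) ^ (γ - 1) * ‖x - y‖ := by
        gcongr
        exact norm_radialRetraction_sub_le (zero_le_one.trans hR) x y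
    _ = (3 : ℝ) ^ (γ - 1) * C₁ * h ^ (-(γ - 1) / (2 * γ)) * ‖x - y‖ := by
        rw [h3R]; ring
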